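/- Eigenvalue-sum bounds via k-trace: for any Hermitian n×n matrix A, ∑_{i=1}^k λ_i(A) ≤ log tr_k[exp(A)] ≤ ∑_{i=1}^k λ_i(A) + log C(n,k), where λ_1(A) ≥ … ≥ λ_n(A) are the eigenvalues in decreasing order and C(n,k) is the binomial coefficient. -/

import Mathlib

noncomputable section
open scoped Matrix ComplexOrder

def trK {n : ℕ} (k : ℕ) (M : Matrix (Fin n) (Fin n) ℂ) : ℂ :=
  ∑ s ∈ Finset.powersetCard k (Finset.univ : Finset (Fin n)),
    (M.submatrix (Subtype.val : {i : Fin n // i ∈ s} → Fin n)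
      (Subtype.val : {i : Fin n // i ∈ s} → Fin n)).det

def mpow {n : ℕ} (A : Matrix (Fin n) (Fin n) ℂ) (t : ℝ) : Matrix (Fin n) (Fin n) ℂ :=
  cfc (fun x : ℝ => x ^ t) A

def mexp {n : ℕ} (A : Matrix (Fin n) (Fin n) ℂ) : Matrix (Fin n) (Fin n) ℂ :=
  cfc Real.exp A

def mlog {n : ℕ} (A : Matrix (Fin n) (Fin n) ℂ) : Matrix (Fin n) (Fin n) ℂ :=
  cfc Real.log A

/-!
Up to sign, `trK k M` is a coefficient of the characteristic polynomial of `M`, so it only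
depends on the eigenvalues; for `M = exp A` it is `∑_{|S| = k} exp (∑_{i ∈ S} λᵢ)`.
This is a sum of `C(n, k)` exponentials whose largest exponent is the sum of the `k` largest
eigenvalues, and the two bounds are the log-sum-exp bounds
`max x ≤ log ∑ exp x ≤ max x + log (number of terms)`.
-/

open Finset Real

theorem Fin.val_le_orderEmbedding_apply {k n : ℕ} (e : Fin k ↪o Fin n) (a : Fin k) :
    (a : ℕ) ≤ e a := by
  have h : (Iic a).map e.toEmbedding ⊆ Iic (e a) := by
    intro b hb
    obtain ⟨c, hc, rfl⟩ := mem_map.mp hb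
    exact mem_Iic.mpr (e.monotone (mem_Iic.mp hc))
  simpa using card_le_card h

theorem Fin.filter_val_lt_eq_map_castLEEmb {n k : ℕ} (hkn : k ≤ n) :
    univ.filter (fun i : Fin n => (i : ℕ) < k) = univ.map (Fin.castLEEmb hkn) := by
  ext i
  simp [Fin.exists_iff, Fin.ext_iff]

theorem Antitone.sum_le_sum_filter_val_lt {M : Type*} [AddCommMonoid M] [PartialOrder M]
    [IsOrderedAddMonoid M] {n k : ℕ} {g : Fin n → M} (hg : Antitone g) (hkn : k ≤ n)
    {s : Finset (Fin n)} (hs : s.card = k) :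
    ∑ i ∈ s, g i ≤ ∑ i ∈ univ.filter (fun i : Fin n => (i : ℕ) < k), g i := by
  rw [Fin.filter_val_lt_eq_map_castLEEmb hkn, sum_map, ← s.map_orderEmbOfFin_univ hs,
    sum_map]
  exact sum_le_sum fun a _ => hg (Fin.val_le_orderEmbedding_apply (s.orderEmbOfFin hs) a)

theorem Real.le_log_sum_exp {ι : Type*} {s : Finset ι} {x : ι → ℝ} {a : ι} (ha : a ∈ s) :
    x a ≤ log (∑ i ∈ s, exp (x i)) := by
  rw [← log_exp (x a)]
  exact log_le_log (exp_pos _) (single_le_sum (fun i _ => (exp_pos (x i)).le) ha)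

theorem Real.log_sum_exp_le {ι : Type*} {s : Finset ι} {x : ι → ℝ} {m : ℝ} (hs : s.Nonempty)
    (hx : ∀ i ∈ s, x i ≤ m) : log (∑ i ∈ s, exp (x i)) ≤ m + log s.card := by
  have hsum : ∑ i ∈ s, exp (x i) ≤ s.card * exp m := by
    simpa using sum_le_card_nsmul s _ _ fun i hi => exp_le_exp.mpr (hx i hi)
  calc log (∑ i ∈ s, exp (x i))
      ≤ log (s.card * exp m) := log_le_log (sum_pos (fun i _ => exp_pos _) hs) hsum
    _ = m + log s.card := by
      rw [log_mul (by simpa using hs.ne_empty) (exp_ne_zero m), log_exp, add_comm]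

theorem trK_eq_neg_one_pow_mul_charpoly_coeff {n k : ℕ} (hkn : k ≤ n)
    (M : Matrix (Fin n) (Fin n) ℂ) :
    trK k M = (-1) ^ k * M.charpoly.coeff (n - k) := by
  have h := M.charpoly_coeff_eq_sum_minors k (by simpa using hkn)
  rw [Fintype.card_fin] at h
  rw [h, ← mul_assoc, ← mul_pow, neg_one_mul, neg_neg, one_pow, one_mul, trK]

theorem trK_eq_of_charpoly_eq {n k : ℕ} (hkn : k ≤ n) {M N : Matrix (Fin n) (Fin n) ℂ}
    (h : M.charpoly = N.charpoly) : trK k M = trK k N := by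
  rw [trK_eq_neg_one_pow_mul_charpoly_coeff hkn, trK_eq_neg_one_pow_mul_charpoly_coeff hkn, h]

theorem trK_diagonal {n : ℕ} (k : ℕ) (d : Fin n → ℂ) :
    trK k (Matrix.diagonal d) = ∑ s ∈ powersetCard k univ, ∏ i ∈ s, d i := by
  refine sum_congr rfl fun s _ => ?_
  rw [Matrix.submatrix_diagonal _ _ Subtype.val_injective, Matrix.det_diagonal]
  exact prod_coe_sort s d

theorem trK_mexp {n k : ℕ} (hkn : k ≤ n) {A : Matrix (Fin n) (Fin n) ℂ} (hA : A.IsHermitian) :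
    trK k (mexp A) = ∑ s ∈ powersetCard k univ, exp (∑ i ∈ s, hA.eigenvalues i) := by
  have hchar : (mexp A).charpoly
      = (Matrix.diagonal fun i => (exp (hA.eigenvalues i) : ℂ)).charpoly := by
    simp only [mexp, hA.charpoly_cfc_eq, Matrix.charpoly_diagonal,
      RCLike.ofReal_eq_complex_ofReal]
  rw [trK_eq_of_charpoly_eq hkn hchar, trK_diagonal]
  simp only [exp_sum, Complex.ofReal_sum, Complex.ofReal_prod]

theorem ktrace_eigenvalue_sum_bounds_general {n k : ℕ} (hkn : k ≤ n)
    (A : Matrix (Fin n) (Fin n) ℂ) (hA : A.IsHermitian)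
    (σ : Equiv.Perm (Fin n))
    (hσ : ∀ i j : Fin n, i ≤ j → hA.eigenvalues (σ j) ≤ hA.eigenvalues (σ i)) :
    (∑ i ∈ Finset.univ.filter (fun i : Fin n => (i : ℕ) < k),
        hA.eigenvalues (σ i)) ≤ Real.log (trK k (mexp A)).re ∧
    Real.log (trK k (mexp A)).re ≤
      (∑ i ∈ Finset.univ.filter (fun i : Fin n => (i : ℕ) < k),
        hA.eigenvalues (σ i)) + Real.log (n.choose k) := by
  set top := univ.filter (fun i : Fin n => (i : ℕ) < k)
  have htop : top.map σ.toEmbedding ∈ powersetCard k univ := by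
    simp [top, Fin.filter_val_lt_eq_map_castLEEmb hkn]
  have hle : ∀ s ∈ powersetCard k (univ : Finset (Fin n)),
      ∑ i ∈ s, hA.eigenvalues i ≤ ∑ i ∈ top, hA.eigenvalues (σ i) := by
    intro s hs
    have hanti : Antitone (hA.eigenvalues ∘ σ) := fun i j hij => hσ i j hij
    have hcard : (s.map σ.symm.toEmbedding).card = k := by simpa using hs
    simpa [sum_map] using hanti.sum_le_sum_filter_val_lt hkn hcard
  rw [trK_mexp hkn hA, Complex.ofReal_re]
  constructor
  · simpa [sum_map] using le_log_sum_exp (x := fun s => ∑ i ∈ s, hA.eigenvalues i) htop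
  · simpa using log_sum_exp_le ⟨_, htop⟩ hle

/-- bounds on the sum of the k largest eigenvalues via the
k-trace of the matrix exponential. Here `σ` sorts the eigenvalues in
decreasing order. -/
theorem ktrace_eigenvalue_sum_bounds {n k : ℕ} (hk : 1 ≤ k) (hkn : k ≤ n)
    (A : Matrix (Fin n) (Fin n) ℂ) (hA : A.IsHermitian)
    (σ : Equiv.Perm (Fin n))
    (hσ : ∀ i j : Fin n, i ≤ j → hA.eigenvalues (σ j) ≤ hA.eigenvalues (σ i)) :
    (∑ i ∈ Finset.univ.filter (fun i : Fin n => (i : ℕ) < k),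
        hA.eigenvalues (σ i)) ≤ Real.log (trK k (mexp A)).re ∧
    Real.log (trK k (mexp A)).re ≤
      (∑ i ∈ Finset.univ.filter (fun i : Fin n => (i : ℕ) < k),
        hA.eigenvalues (σ i)) + Real.log (n.choose k) :=
  ktrace_eigenvalue_sum_bounds_general hkn A hA σ hσ
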